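/- The real root λ of 8λ³ + 4λ² + 3λ − 1 = 0 satisfies λ ≈ 0.23017, and consequently the sim value s = (2/3)·log₂(1/λ) lies strictly between 1.41 and 1.42. -/
import Mathlib


open Real

/-- The real root λ of 8λ³ + 4λ² + 3λ − 1 = 0 satisfies λ ≈ 0.23017, and
the sim value s = (2/3)·log₂(1/λ) lies strictly between 1.41 and 1.42. -/
theorem stmt_2 (lam : ℝ) (h : 8 * lam ^ 3 + 4 * lam ^ 2 + 3 * lam - 1 = 0) :
    |lam - 0.23017| < 0.0001 ∧
    1.41 < (2 / 3) * Real.logb 2 (1 / lam) ∧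
    (2 / 3) * Real.logb 2 (1 / lam) < 1.42 := by
  have hl : (0.23016 : ℝ) < lam := by nlinarith [sq_nonneg lam, sq_nonneg (lam - 0.23016), sq_nonneg (lam + 1)]
  have hu : lam < (0.230175 : ℝ) := by nlinarith [sq_nonneg lam, sq_nonneg (lam - 0.230175), sq_nonneg (lam + 1)]
  have hpos : (0:ℝ) < lam := by linarith
  set c : ℝ := 1 / (4 * lam) with hc
  have hcpos : 0 < c := by positivity
  have hc1 : (1.0421 : ℝ) ^ 2 < c := by
    rw [hc, lt_div_iff₀ (by linarith)]
    nlinarith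
  have hc2 : c < (1.08621 : ℝ) := by
    rw [hc, div_lt_iff₀ (by linarith)]
    nlinarith
  have hL : (0:ℝ) < Real.log 2 := Real.log_pos (by norm_num)
  have hL1 : (0.6931471803 : ℝ) < Real.log 2 := Real.log_two_gt_d9
  have hL2 : Real.log 2 < (0.6931471808 : ℝ) := Real.log_two_lt_d9
  -- upper bound on log c
  have hlc2 : Real.log c < 0.08621 := by
    have := Real.log_le_sub_one_of_pos hcpos
    linarith
  -- lower bound on log c
  have hlog0421 : (1 : ℝ) - 1 / 1.0421 ≤ Real.log 1.0421 := by
    have h1 : (0:ℝ) < 1 / 1.0421 := by norm_num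
    have := Real.log_le_sub_one_of_pos h1
    have h2 : Real.log (1 / (1.0421:ℝ)) = - Real.log 1.0421 := by
      rw [Real.log_div one_ne_zero (by norm_num), Real.log_one]; ring
    rw [h2] at this
    linarith
  have hlc1 : (0.0807 : ℝ) < Real.log c := by
    have h1 : Real.log ((1.0421:ℝ)^2) < Real.log c :=
      Real.log_lt_log (by positivity) hc1
    rw [Real.log_pow] at h1
    push_cast at h1
    nlinarith
  -- express logb
  have hlam : (1:ℝ)/lam = 4 * c := by
    rw [hc]; field_simp
  have hkey : Real.logb 2 (1/lam) = (2 * Real.log 2 + Real.log c) / Real.log 2 := by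
    have h4 : Real.log 4 = 2 * Real.log 2 := by
      rw [show (4:ℝ) = 2^2 by norm_num, Real.log_pow]; push_cast; ring
    rw [hlam, Real.logb, Real.log_mul (by norm_num) (ne_of_gt hcpos), h4]
  refine ⟨?_, ?_, ?_⟩
  · rw [abs_lt]; constructor <;> nlinarith
  · rw [hkey]
    have heq : (2:ℝ)/3 * ((2 * Real.log 2 + Real.log c) / Real.log 2)
        = (4 * Real.log 2 + 2 * Real.log c) / (3 * Real.log 2) := by
      field_simp; ring
    rw [heq, lt_div_iff₀ (by positivity)]
    nlinarith
  · rw [hkey]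
    have : (2:ℝ)/3 * ((2 * Real.log 2 + Real.log c) / Real.log 2)
        = (4 * Real.log 2 + 2 * Real.log c) / (3 * Real.log 2) := by
      field_simp; ring
    rw [this, div_lt_iff₀ (by positivity)]
    nlinarith
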